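/- In the same setting as the overlapping-groups construction (groups $A$, $B$ with $|A\setminus B|=|B\setminus A|=4n$ all labeled $+$ and $-$ respectively, and $|A\cap B|=2n$ with $n$ positives and $n$ negatives), there exist classifiers $f_A$ and $f_B$ such that $\mathrm{err}_{f_A}(A) = 1/18$ and $\mathrm{err}_{f_B}(B) = 1/18$, where $\mathrm{err}_f(g)$ denotes the unweighted average of false positive and false negative rates of $f$ on group $g$. Specifically, $f_A$ predicts $+$ on $A\setminus B$ and $-$ elsewhere, and $f_B$ predicts $+$ on $A\cap B$ and $-$ elsewhere. -/

import Mathlib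

/-!
A classifier that is exact on a block `P` of uniformly positive points of a group `g` and predicts `-`
on the rest of `g` makes no false positives; its false negatives are the positives of `g \ P`, so
its error is `k / (|P| + k) / 2` with `k` the number of positives off `P`. For `A` this gives
`m / (8m + m) / 2 = 1/18`. Negating labels and predictions swaps the two rates and leaves the error
unchanged, which turns the case of `f_B` on `B` into the same computation with `P = B \ A`.
-/

open Finset

/-- Unweighted average of false positive and false negative rates of classifier `h`
on group `g` (labels: `true` = `+`, `false` = `-`). -/
noncomputable def errRate {X : Type*} [DecidableEq X]
    (label h : X → Bool) (g : Finset X) : ℝ :=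
  (((g.filter (fun x => label x = true ∧ h x = false)).card : ℝ) /
      ((g.filter (fun x => label x = true)).card : ℝ) +
    ((g.filter (fun x => label x = false ∧ h x = true)).card : ℝ) /
      ((g.filter (fun x => label x = false)).card : ℝ)) / 2

section ErrRate

variable {X : Type*} [DecidableEq X]

theorem errRate_not_not (label h : X → Bool) (g : Finset X) :
    errRate (fun x => !label x) (fun x => !h x) g = errRate label h g := by
  simp only [errRate, Bool.not_eq_true', Bool.not_eq_false']
  ring

theorem errRate_eq_of_exact_on_positive_part {label h : X → Bool} {g P : Finset X}
    (hPg : P ⊆ g) (hh : ∀ x ∈ g, h x = true ↔ x ∈ P) (hlabel : ∀ x ∈ P, label x = true) :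
    errRate label h g =
      (#((g \ P).filter (fun x => label x = true)) : ℝ) /
        (#P + #((g \ P).filter (fun x => label x = true))) / 2 := by
  have hFP : g.filter (fun x => label x = false ∧ h x = true) = ∅ :=
    filter_eq_empty_iff.mpr fun x hx ⟨hneg, hpos⟩ => by
      simp [hlabel x ((hh x hx).mp hpos)] at hneg
  have hFN : g.filter (fun x => label x = true ∧ h x = false) =
      (g \ P).filter (fun x => label x = true) := by
    ext x
    by_cases hx : x ∈ g
    · simp [hx, ← hh x hx, and_comm]
    · simp [hx]
  have hpos : #(g.filter (fun x => label x = true)) =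
      #P + #((g \ P).filter (fun x => label x = true)) := by
    rw [← union_sdiff_of_subset hPg, filter_union, filter_true_of_mem hlabel,
      card_union_of_disjoint (disjoint_sdiff.mono_right (filter_subset _ _)),
      union_sdiff_of_subset hPg]
  rw [errRate, hFP, hFN, hpos, card_empty]
  push_cast
  ring

end ErrRate

theorem stmt1_general (m : ℕ) (hm : 1 ≤ m) (X : Type*) [DecidableEq X]
    (A B : Finset X) (label : X → Bool)
    (hAB : (A \ B).card = 8 * m)
    (hBA : (B \ A).card = 8 * m)
    (hI : (A ∩ B).card = 2 * m)
    (hlabA : ∀ x ∈ A \ B, label x = true)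
    (hlabB : ∀ x ∈ B \ A, label x = false)
    (hIpos : ((A ∩ B).filter (fun x => label x = true)).card = m) :
    ∃ fA fB : X → Bool,
      (∀ x, fA x = true ↔ x ∈ A \ B) ∧
      (∀ x, fB x = true ↔ x ∈ A ∩ B) ∧
      errRate label fA A = 1 / 18 ∧
      errRate label fB B = 1 / 18 := by
  have hIneg : #((B ∩ A).filter (fun x => (!label x) = true)) = m := by
    have := card_filter_add_card_filter_not (s := A ∩ B) (fun x => label x = true)
    simp only [Bool.not_eq_true] at this
    simp only [Bool.not_eq_true', inter_comm B A]
    omega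
  have hratio : (m : ℝ) / (((8 * m : ℕ) : ℝ) + m) / 2 = 1 / 18 := by
    have : (m : ℝ) ≠ 0 := Nat.cast_ne_zero.mpr (by omega)
    push_cast
    field_simp
    ring
  refine ⟨fun x => x ∈ A \ B, fun x => x ∈ A ∩ B, fun x => by simp, fun x => by simp, ?_, ?_⟩
  · rw [errRate_eq_of_exact_on_positive_part sdiff_subset (by simp) hlabA,
      sdiff_sdiff_right_self, inf_eq_inter, hIpos, hAB, hratio]
  · rw [← errRate_not_not, errRate_eq_of_exact_on_positive_part (P := B \ A) sdiff_subset
      (fun x hx => by simp [hx]) (by simpa using hlabB), sdiff_sdiff_right_self, inf_eq_inter,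
      hIneg, hBA, hratio]

theorem stmt1 (m : ℕ) (hm : 1 ≤ m) (X : Type*) [DecidableEq X] [Fintype X]
    (A B : Finset X) (label : X → Bool)
    (hAB : (A \ B).card = 8 * m)
    (hBA : (B \ A).card = 8 * m)
    (hI : (A ∩ B).card = 2 * m)
    (hlabA : ∀ x ∈ A \ B, label x = true)
    (hlabB : ∀ x ∈ B \ A, label x = false)
    (hIpos : ((A ∩ B).filter (fun x => label x = true)).card = m) :
    ∃ fA fB : X → Bool,
      (∀ x, fA x = true ↔ x ∈ A \ B) ∧
      (∀ x, fB x = true ↔ x ∈ A ∩ B) ∧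
      errRate label fA A = 1 / 18 ∧
      errRate label fB B = 1 / 18 :=
  stmt1_general m hm X A B label hAB hBA hI hlabA hlabB hIpos
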